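/- Let α ∈ ℝ \ {0, 2/3}, β a positive integer, and F(s) = s^β. On the product manifold (0,∞) × ℝ² with coordinates (r,x,y), the warped product Riemannian metric g = dr² + r^{2α}(dx² + dy²) satisfies E_F(g) = λ g for some constant λ if and only if α = −2(2β² − 3β + 1)/(2β − 3). Moreover the scalar curvature of g is S = 2α(2 − 3α)/r². -/

import Mathlib

/-!
**STATEMENT 7.**  Let `α ∈ ℝ \ {0, 2/3}`, `β` a positive integer, and
`F(s) = s^β`.  On the product manifold `(0,∞) × ℝ²` with coordinates
`(r, x, y)`, the warped product Riemannian metric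
`g = dr² + r^{2α}(dx² + dy²)` satisfies `E_F(g) = λ g` for some constant `λ`
if and only if `α = −2(2β² − 3β + 1)/(2β − 3)`.  Moreover the scalar curvature
of `g` is `S = 2α(2 − 3α)/r²`.

The manifold is covered by the single global chart with coordinates indexed by
`Fin 3` (with `r = x 0`, restricted to `0 < x 0`), and all geometric
quantities are built honestly from the matrix of components of `g`:  `pd` is
the coordinate partial derivative, `christoffel` the Christoffel symbols of
the Levi-Civita connection, `ricci` the Ricci tensor, `scal` the scalar
curvature, `hessian` the Hessian, `lap` the Laplacian `Δf = −Tr(Hess f)`, and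
`EF` the F-Einstein tensor
`E_F(g) = F'(S)·Ric − Hess F'(S) − (Δ F'(S) + (1/2) F(S)) g`.
-/

noncomputable section

/-- Partial derivative along the `i`-th coordinate. -/
def pd {n : ℕ} (i : Fin n) (f : (Fin n → ℝ) → ℝ) (x : Fin n → ℝ) : ℝ :=
  deriv (fun s => f (Function.update x i s)) (x i)

/-- Christoffel symbols `Γ^k_{ij}` of the Levi-Civita connection of `g`. -/
def christoffel {n : ℕ} (g : (Fin n → ℝ) → Matrix (Fin n) (Fin n) ℝ)
    (k i j : Fin n) (x : Fin n → ℝ) : ℝ :=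
  (1 / 2) * ∑ l, (g x)⁻¹ k l *
    (pd i (fun y => g y j l) x + pd j (fun y => g y i l) x
      - pd l (fun y => g y i j) x)

/-- The Ricci tensor of `g` in coordinates:
`Ric_{ij} = ∂_k Γ^k_{ij} − ∂_i Γ^k_{kj} + Γ^k_{kl} Γ^l_{ij} − Γ^k_{il} Γ^l_{kj}`. -/
def ricci {n : ℕ} (g : (Fin n → ℝ) → Matrix (Fin n) (Fin n) ℝ)
    (i j : Fin n) (x : Fin n → ℝ) : ℝ :=
  (∑ k, (pd k (fun y => christoffel g k i j y) x
          - pd i (fun y => christoffel g k k j y) x))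
    + ∑ k, ∑ l, (christoffel g k k l x * christoffel g l i j x
          - christoffel g k i l x * christoffel g l k j x)

/-- The scalar curvature `S = g^{ij} Ric_{ij}`. -/
def scal {n : ℕ} (g : (Fin n → ℝ) → Matrix (Fin n) (Fin n) ℝ)
    (x : Fin n → ℝ) : ℝ :=
  ∑ i, ∑ j, (g x)⁻¹ i j * ricci g i j x

/-- The Hessian of `f` with respect to `g`:
`(Hess f)_{ij} = ∂ᵢ∂ⱼ f − Γ^k_{ij} ∂_k f`. -/
def hessian {n : ℕ} (g : (Fin n → ℝ) → Matrix (Fin n) (Fin n) ℝ)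
    (f : (Fin n → ℝ) → ℝ) (i j : Fin n) (x : Fin n → ℝ) : ℝ :=
  pd i (fun y => pd j f y) x - ∑ k, christoffel g k i j x * pd k f x

/-- The Laplacian `Δ f = −Tr (Hess f)` with respect to `g`. -/
def lap {n : ℕ} (g : (Fin n → ℝ) → Matrix (Fin n) (Fin n) ℝ)
    (f : (Fin n → ℝ) → ℝ) (x : Fin n → ℝ) : ℝ :=
  -∑ i, ∑ j, (g x)⁻¹ i j * hessian g f i j x

/-- The F-Einstein tensor
`E_F(g) = F'(S)·Ric − Hess F'(S) − (Δ F'(S) + (1/2) F(S)) g`. -/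
def EF {n : ℕ} (F : ℝ → ℝ) (g : (Fin n → ℝ) → Matrix (Fin n) (Fin n) ℝ)
    (i j : Fin n) (x : Fin n → ℝ) : ℝ :=
  deriv F (scal g x) * ricci g i j x
    - hessian g (fun y => deriv F (scal g y)) i j x
    - (lap g (fun y => deriv F (scal g y)) x + (1 / 2) * F (scal g x)) * g x i j

/-- The warped product metric `g = dr² + r^{2α}(dx² + dy²)` on
`(0,∞) × ℝ²`, in the coordinates `(r, x, y) = (x 0, x 1, x 2)`. -/
def gW (α : ℝ) (x : Fin 3 → ℝ) : Matrix (Fin 3) (Fin 3) ℝ :=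
  Matrix.diagonal ![1, x 0 ^ (2 * α), x 0 ^ (2 * α)]

/-!
Every component of `g = dr² + r^{2α}(dx² + dy²)` depends on `r` alone, and so does every
quantity built from it: each component of the Christoffel symbols, of `Ric`, and of the
Hessian of a power `K r^m` is a monomial `C r^e`. With `c = 2α(2 − 3α)` one gets `S = c r⁻²`,
hence `F'(S) = β c^{β-1} r^{2-2β}`, and `E_F(g) = c^{β-1} r^{-2β} Φ g`, where `Φ = α P` in the
`r`-direction and `Φ = (α − β) P` along the fibre, with `P = (3 − 2β)α − 2(2β² − 3β + 1)`.
A constant `λ` can match the non-constant factor `r^{-2β}` only if `α P = 0`, i.e. `P = 0`;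
conversely `P = 0` makes `E_F(g)` vanish.
-/

open Set Filter Topology

section DependsOnOneCoordinate

variable {n : ℕ} {a : Fin n} {U : Set ℝ} {f : (Fin n → ℝ) → ℝ} {h : ℝ → ℝ} {x : Fin n → ℝ}

lemma pd_eq_zero_of_eq_comp_apply {i : Fin n} (hi : i ≠ a)
    (hf : ∀ y, y a ∈ U → f y = h (y a)) (hx : x a ∈ U) : pd i f x = 0 := by
  have hconst : (fun s => f (Function.update x i s)) = fun _ => h (x a) := by
    funext s
    have hxa : Function.update x i s a = x a := Function.update_of_ne hi.symm _ _
    rw [hf _ (by rwa [hxa]), hxa]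
  rw [pd, hconst, deriv_const]

lemma pd_eq_of_eq_comp_apply (hU : IsOpen U) (hf : ∀ y, y a ∈ U → f y = h (y a))
    (hx : x a ∈ U) {h' : ℝ} (hd : HasDerivAt h h' (x a)) : pd a f x = h' := by
  have hev : (fun s => f (Function.update x a s)) =ᶠ[𝓝 (x a)] h := by
    filter_upwards [hU.mem_nhds hx] with s hs
    have hxa : Function.update x a s a = s := Function.update_self _ _ _
    rw [hf _ (by rwa [hxa]), hxa]
  rw [pd, hev.deriv_eq, hd.deriv]

lemma pd_eq_of_eq_mul_rpow {K m : ℝ} (hf : ∀ y, 0 < y a → f y = K * y a ^ m)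
    (hx : 0 < x a) : pd a f x = K * m * x a ^ (m - 1) := by
  refine pd_eq_of_eq_comp_apply (U := Ioi 0) (h := fun r => K * r ^ m) isOpen_Ioi hf hx ?_
  simpa [mul_assoc] using (Real.hasDerivAt_rpow_const (p := m) (Or.inl hx.ne')).const_mul K

lemma pd_eq_zero_of_eq_mul_rpow {i : Fin n} (hi : i ≠ a) {K m : ℝ}
    (hf : ∀ y, 0 < y a → f y = K * y a ^ m) (hx : 0 < x a) : pd i f x = 0 :=
  pd_eq_zero_of_eq_comp_apply (U := Ioi 0) (h := fun r => K * r ^ m) hi hf hx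

end DependsOnOneCoordinate

lemma eq_zero_of_forall_mul_rpow_eq {a e c : ℝ} (he : e ≠ 0)
    (h : ∀ r : ℝ, 0 < r → a * r ^ e = c) : a = 0 := by
  have h2 : (2 : ℝ) ^ e ≠ 1 := by
    rw [← Real.rpow_zero 2, Ne, Real.rpow_right_inj two_pos (by norm_num)]
    exact he
  have h1 := h 1 one_pos
  rw [Real.one_rpow, mul_one] at h1
  have hzero : a * (2 ^ e - 1) = 0 := by linear_combination h 2 two_pos - h1
  exact (mul_eq_zero.mp hzero).resolve_right (sub_ne_zero.mpr h2)

def gWExp (α : ℝ) (i : Fin 3) : ℝ := if i = 0 then 0 else 2 * α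

section WarpedProduct

variable (α : ℝ) {x : Fin 3 → ℝ}

lemma gW_apply (x : Fin 3 → ℝ) (i j : Fin 3) :
    gW α x i j = if i = j then x 0 ^ gWExp α i else 0 := by
  fin_cases i <;> fin_cases j <;> simp [gW, gWExp]

lemma gW_inv_apply (hx : 0 < x 0) (i j : Fin 3) :
    (gW α x)⁻¹ i j = if i = j then x 0 ^ (-gWExp α i) else 0 := by
  have hne : x 0 ^ (2 * α) ≠ 0 := (Real.rpow_pos_of_pos hx _).ne'
  have hinv : (gW α x)⁻¹ = Matrix.diagonal ![1, x 0 ^ (-(2 * α)), x 0 ^ (-(2 * α))] := by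
    refine Matrix.inv_eq_right_inv ?_
    rw [gW, Matrix.diagonal_mul_diagonal]
    ext a b
    fin_cases a <;> fin_cases b <;>
      simp [Real.rpow_neg hx.le, mul_inv_cancel₀ hne]
  rw [hinv]
  fin_cases i <;> fin_cases j <;> simp [gWExp]

lemma pd_gW (hx : 0 < x 0) (i j l : Fin 3) :
    pd i (fun y => gW α y j l) x
      = if i = 0 ∧ j = l then gWExp α j * x 0 ^ (gWExp α j - 1) else 0 := by
  have hf : ∀ y : Fin 3 → ℝ, 0 < y 0 →
      gW α y j l = (if j = l then 1 else 0) * y 0 ^ gWExp α j := by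
    intro y _
    rw [gW_apply]
    split_ifs <;> simp
  by_cases hi : i = 0
  · subst hi
    rw [pd_eq_of_eq_mul_rpow hf hx]
    split_ifs <;> simp_all
  · rw [pd_eq_zero_of_eq_mul_rpow hi hf hx, if_neg (fun hc => hi hc.1)]

/-- Coefficients of the Christoffel symbols of `gW α`: `Γ^0_{ii} = -α r^{2α-1}` and
`Γ^k_{0k} = Γ^k_{k0} = α r⁻¹` for `i, k ≠ 0`, all others vanish. -/
def christoffelCoeff (α : ℝ) (k i j : Fin 3) : ℝ :=
  if k = 0 ∧ i = j ∧ i ≠ 0 then -α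
  else if k ≠ 0 ∧ ((i = 0 ∧ j = k) ∨ (j = 0 ∧ i = k)) then α else 0

def christoffelExp (α : ℝ) (k i j : Fin 3) : ℝ :=
  if k = 0 ∧ i = j ∧ i ≠ 0 then 2 * α - 1
  else if k ≠ 0 ∧ ((i = 0 ∧ j = k) ∨ (j = 0 ∧ i = k)) then -1 else 0

lemma christoffel_gW (hx : 0 < x 0) (k i j : Fin 3) :
    christoffel (gW α) k i j x = christoffelCoeff α k i j * x 0 ^ christoffelExp α k i j := by
  fin_cases k <;> fin_cases i <;> fin_cases j <;>
    simp only [christoffel, Fin.sum_univ_three, gW_inv_apply α hx, pd_gW α hx] <;>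
    norm_num [christoffelCoeff, christoffelExp, gWExp, Fin.ext_iff] <;>
    simp only [Real.rpow_sub hx, Real.rpow_neg hx.le, Real.rpow_one] <;>
    field_simp

lemma pd_christoffel_gW (hx : 0 < x 0) (p k i j : Fin 3) :
    pd p (fun y => christoffel (gW α) k i j y) x =
      if p = 0 then
        christoffelCoeff α k i j * christoffelExp α k i j * x 0 ^ (christoffelExp α k i j - 1)
      else 0 := by
  have hf : ∀ y : Fin 3 → ℝ, 0 < y 0 → christoffel (gW α) k i j y
      = christoffelCoeff α k i j * y 0 ^ christoffelExp α k i j :=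
    fun y hy => christoffel_gW α hy k i j
  split_ifs with hp
  · subst hp
    exact pd_eq_of_eq_mul_rpow hf hx
  · exact pd_eq_zero_of_eq_mul_rpow hp hf hx

/-- Coefficients of the Ricci tensor of `gW α`: `Ric_{00} = -2α(α-1) r⁻²` and
`Ric_{ii} = -α(2α-1) r^{2α-2}` for `i ≠ 0`. -/
def ricciCoeff (α : ℝ) (i j : Fin 3) : ℝ :=
  if i = 0 ∧ j = 0 then -2 * α * (α - 1) else if i = j then -α * (2 * α - 1) else 0

def ricciExp (α : ℝ) (i j : Fin 3) : ℝ :=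
  if i = 0 ∧ j = 0 then -2 else 2 * α - 2

lemma ricci_gW (hx : 0 < x 0) (i j : Fin 3) :
    ricci (gW α) i j x = ricciCoeff α i j * x 0 ^ ricciExp α i j := by
  fin_cases i <;> fin_cases j <;>
    simp only [ricci, Fin.sum_univ_three, christoffel_gW α hx, pd_christoffel_gW α hx] <;>
    norm_num [christoffelCoeff, christoffelExp, ricciCoeff, ricciExp, Fin.ext_iff] <;>
    simp only [Real.rpow_sub hx, Real.rpow_neg hx.le, Real.rpow_one, Real.rpow_two] <;>
    field_simp <;> ring

lemma scal_gW (hx : 0 < x 0) : scal (gW α) x = 2 * α * (2 - 3 * α) * x 0 ^ (-2 : ℝ) := by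
  simp only [scal, Fin.sum_univ_three, ricci_gW α hx, gW_inv_apply α hx]
  norm_num [ricciCoeff, ricciExp, gWExp, Fin.ext_iff]
  simp only [Real.rpow_sub hx, Real.rpow_neg hx.le, Real.rpow_two]
  field_simp
  ring

lemma hessian_gW_of_eq_mul_rpow {K m : ℝ} {f : (Fin 3 → ℝ) → ℝ}
    (hf : ∀ y : Fin 3 → ℝ, 0 < y 0 → f y = K * y 0 ^ m) (hx : 0 < x 0) (i j : Fin 3) :
    hessian (gW α) f i j x =
      if i = 0 ∧ j = 0 then K * m * (m - 1) * x 0 ^ (m - 2)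
      else if i = j then α * K * m * x 0 ^ (2 * α + m - 2) else 0 := by
  have hdf : ∀ y : Fin 3 → ℝ, 0 < y 0 → pd 0 f y = K * m * y 0 ^ (m - 1) :=
    fun y hy => pd_eq_of_eq_mul_rpow hf hy
  have hdf_ne : ∀ q : Fin 3, q ≠ 0 → ∀ y : Fin 3 → ℝ, 0 < y 0 → pd q f y = 0 :=
    fun q hq y hy => pd_eq_zero_of_eq_mul_rpow hq hf hy
  have hd2f : ∀ p q : Fin 3, pd p (fun y => pd q f y) x =
      if p = 0 ∧ q = 0 then K * m * (m - 1) * x 0 ^ (m - 1 - 1) else 0 := by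
    intro p q
    have hq : ∀ y : Fin 3 → ℝ, 0 < y 0 →
        pd q f y = (if q = 0 then K * m else 0) * y 0 ^ (m - 1) := by
      intro y hy
      split_ifs with h
      · exact h ▸ hdf y hy
      · rw [hdf_ne q h y hy, zero_mul]
    by_cases hp : p = 0
    · rw [hp, pd_eq_of_eq_mul_rpow hq hx]
      split_ifs <;> simp_all
    · rw [pd_eq_zero_of_eq_mul_rpow hp hq hx, if_neg (fun h => hp h.1)]
  have hmk2 : (⟨2, by omega⟩ : Fin 3) = 2 := rfl
  fin_cases i <;> fin_cases j <;>
    simp only [Fin.mk_zero, Fin.mk_one, hmk2, hessian, Fin.sum_univ_three,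
      christoffel_gW α hx, hd2f, hdf x hx] <;>
    norm_num [christoffelCoeff, christoffelExp, Fin.ext_iff, hdf_ne _ _ x hx]
  · exact Or.inl (by rw [show (m - 1 - 1 : ℝ) = m - 2 by ring])
  all_goals rw [show (2 * α + m - 2 : ℝ) = 2 * α - 1 + (m - 1) by ring, Real.rpow_add hx]; ring

lemma lap_gW_of_eq_mul_rpow {K m : ℝ} {f : (Fin 3 → ℝ) → ℝ}
    (hf : ∀ y : Fin 3 → ℝ, 0 < y 0 → f y = K * y 0 ^ m) (hx : 0 < x 0) :
    lap (gW α) f x = -(K * m * (m - 1) + 2 * α * K * m) * x 0 ^ (m - 2) := by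
  simp only [lap, Fin.sum_univ_three, gW_inv_apply α hx, hessian_gW_of_eq_mul_rpow α hf hx]
  norm_num [gWExp, Fin.ext_iff]
  rw [show (2 * α + m - 2 : ℝ) = 2 * α + (m - 2) by ring, Real.rpow_add hx,
    Real.rpow_neg hx.le]
  field_simp
  ring

end WarpedProduct

section FEinstein

variable (α : ℝ) {x : Fin 3 → ℝ}

lemma pow_scal_gW (β : ℕ) (hx : 0 < x 0) :
    scal (gW α) x ^ β = (2 * α * (2 - 3 * α)) ^ β * x 0 ^ (-2 * β : ℝ) := by
  rw [scal_gW α hx, mul_pow, Real.rpow_mul hx.le, Real.rpow_natCast]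

lemma deriv_pow_scal_gW {β : ℕ} (hβ : 0 < β) (hx : 0 < x 0) :
    deriv (fun s : ℝ => s ^ β) (scal (gW α) x)
      = β * (2 * α * (2 - 3 * α)) ^ (β - 1) * x 0 ^ (2 - 2 * β : ℝ) := by
  rw [deriv_pow_field, pow_scal_gW α (β - 1) hx, Nat.cast_sub hβ, Nat.cast_one, mul_assoc]
  ring_nf

lemma EF_gW {β : ℕ} (hβ : 0 < β) (hx : 0 < x 0) (i j : Fin 3) :
    EF (fun s => s ^ β) (gW α) i j x =
      (2 * α * (2 - 3 * α)) ^ (β - 1) * (if i = 0 then α else α - β)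
        * ((3 - 2 * β) * α - 2 * (2 * β ^ 2 - 3 * β + 1)) * x 0 ^ (-2 * β : ℝ) * gW α x i j := by
  have hF' : ∀ y : Fin 3 → ℝ, 0 < y 0 → deriv (fun s : ℝ => s ^ β) (scal (gW α) y)
      = β * (2 * α * (2 - 3 * α)) ^ (β - 1) * y 0 ^ (2 - 2 * β : ℝ) :=
    fun y hy => deriv_pow_scal_gW α hβ hy
  have hc : (2 * α * (2 - 3 * α)) ^ β
      = (2 * α * (2 - 3 * α)) ^ (β - 1) * (2 * α * (2 - 3 * α)) := by
    rw [← pow_succ, Nat.sub_add_cancel hβ]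
  have e1 : x 0 ^ (2 - 2 * β : ℝ) = x 0 ^ (-(2 * β) : ℝ) * x 0 ^ 2 := by
    rw [show (2 - 2 * β : ℝ) = -(2 * β) + 2 by ring, Real.rpow_add hx, Real.rpow_two]
  have e2 : x 0 ^ (2 * α - 2) = x 0 ^ (2 * α) * (x 0 ^ 2)⁻¹ := by
    rw [Real.rpow_sub hx, Real.rpow_two, div_eq_mul_inv]
  have e3 : x 0 ^ (2 * α + (2 - 2 * β) - 2) = x 0 ^ (-(2 * β) : ℝ) * x 0 ^ (2 * α) := by
    rw [show (2 * α + (2 - 2 * β) - 2 : ℝ) = -(2 * β) + 2 * α by ring, Real.rpow_add hx]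
  have hmk2 : (⟨2, by omega⟩ : Fin 3) = 2 := rfl
  fin_cases i <;> fin_cases j <;>
    simp only [Fin.mk_zero, Fin.mk_one, hmk2, EF, hF' x hx, ricci_gW α hx,
      hessian_gW_of_eq_mul_rpow α hF' hx, lap_gW_of_eq_mul_rpow α hF' hx, pow_scal_gW α β hx,
      gW_apply] <;>
    norm_num [ricciCoeff, ricciExp, gWExp, Fin.ext_iff] <;>
    simp only [e1, e2, e3, hc] <;>
    field_simp <;>
    ring

end FEinstein

lemma exists_forall_EF_gW_eq_mul_iff {α : ℝ} (hα0 : α ≠ 0) (hα23 : α ≠ 2 / 3)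
    {β : ℕ} (hβ : 0 < β) :
    (∃ lam : ℝ, ∀ x : Fin 3 → ℝ, 0 < x 0 → ∀ i j,
        EF (fun s => s ^ β) (gW α) i j x = lam * gW α x i j)
      ↔ (3 - 2 * β) * α - 2 * (2 * β ^ 2 - 3 * β + 1) = 0 := by
  constructor
  · rintro ⟨lam, hlam⟩
    have hc : (2 * α * (2 - 3 * α)) ^ (β - 1) ≠ 0 :=
      pow_ne_zero _ (mul_ne_zero (mul_ne_zero two_ne_zero hα0)
        (sub_ne_zero.mpr fun h => hα23 (by linarith)))
    have hβ' : (-2 * β : ℝ) ≠ 0 := by positivity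
    have hcoeff : (2 * α * (2 - 3 * α)) ^ (β - 1) * α
        * ((3 - 2 * β) * α - 2 * (2 * β ^ 2 - 3 * β + 1)) = 0 := by
      refine eq_zero_of_forall_mul_rpow_eq (c := lam) hβ' fun r hr => ?_
      simpa [EF_gW α hβ (x := fun _ => r) hr, gW_apply, gWExp] using hlam (fun _ => r) hr 0 0
    simpa [hc, hα0] using hcoeff
  · intro hP
    exact ⟨0, fun x hx i j => by simp [EF_gW α hβ hx, hP]⟩

/-- **The warped product example.** -/
theorem warped_product_F_Einstein_example
    (α : ℝ) (hα0 : α ≠ 0) (hα23 : α ≠ 2 / 3)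
    (β : ℕ) (hβ : 0 < β) :
    -- E_F(g) = λ g (for F(s) = s^β) iff α = −2(2β² − 3β + 1)/(2β − 3) ...
    ((∃ lam : ℝ, ∀ x : Fin 3 → ℝ, 0 < x 0 → ∀ i j,
        EF (fun s => s ^ β) (gW α) i j x = lam * gW α x i j)
      ↔ α = -2 * ((2 * (β : ℝ) ^ 2 - 3 * (β : ℝ) + 1) / (2 * (β : ℝ) - 3)))
    -- ... and moreover the scalar curvature is S = 2α(2 − 3α)/r²
    ∧ (∀ x : Fin 3 → ℝ, 0 < x 0 →
        scal (gW α) x = 2 * α * (2 - 3 * α) / (x 0) ^ 2) := by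
  have h23 : (2 * β - 3 : ℝ) ≠ 0 := by
    intro h
    have : 2 * β = 3 := by exact_mod_cast (by linarith : (2 * β : ℝ) = 3)
    omega
  refine ⟨?_, fun x hx => ?_⟩
  · rw [exists_forall_EF_gW_eq_mul_iff hα0 hα23 hβ, mul_div_assoc', eq_div_iff h23]
    constructor <;> intro h <;> linear_combination -h
  · rw [scal_gW α hx, Real.rpow_neg hx.le, Real.rpow_two, div_eq_mul_inv]
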